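/- Let n = 2^d. For every Boolean function f : {0,1}ⁿ → {0,1}, there exists a function g among the four functions {constant 0, constant 1, T_d, 1 − T_d} such that |{X ∈ {0,1}ⁿ : f(X) = g(X)}| ≥ 2^{n−1} + 1. -/

import Mathlib

/-!
`T_d` is true on an odd number of inputs: the two subtrees read disjoint halves of the input,
so an AND gate multiplies their counts, and an OR gate does the same for the counts of false
inputs, which have the same parity as the true ones because `2 ^ (2 ^ (d - 1))` is even.

If no candidate agreed with `f` on more than half of the `2 ^ n` inputs, then, as the agreement
sets of `f` with `g` and with `!g` are complementary, `f` would agree with each of the four on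
exactly `2 ^ (n - 1)` inputs. But `#{f = T_d} + #{f} + #{T_d} ≡ 2 ^ n (mod 2)`, and with
`#{f = T_d} = #{f} = 2 ^ (n - 1)` this forces `#{T_d}` to be even.
-/

/-- The complete binary AND/OR tree `T_d : {0,1}^{2^d} → {0,1}`:
`T_0(x) = x`; for `d > 0`, the root is an AND gate if `d` is odd and an OR gate
if `d` is even, applied to the two half-trees `T_{d-1}`. -/
def andOrTree : (d : ℕ) → (Fin (2 ^ d) → Bool) → Bool
  | 0, X => X ⟨0, by norm_num⟩
  | d + 1, X =>
    let L := andOrTree d (fun i =>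
      X (Fin.castLE (Nat.pow_le_pow_right (by norm_num) (Nat.le_succ d)) i))
    let R := andOrTree d (fun i =>
      X ⟨2 ^ d + i.val, by have := i.isLt; rw [pow_succ]; omega⟩)
    if (d + 1) % 2 = 1 then L && R else L || R

open Finset

section BoolCounting

variable {α β : Type*} [Fintype α] [Fintype β]

lemma card_filter_not_add_card_filter (g : α → Bool) :
    #{x | (!g x) = true} + #{x | g x = true} = Fintype.card α := by
  rw [add_comm, ← card_univ, ← card_filter_add_card_filter_not (s := univ) (fun x => g x = true)]
  simp

lemma odd_card_filter_not_iff (hα : Even (Fintype.card α)) (g : α → Bool) :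
    Odd #{x | (!g x) = true} ↔ Odd #{x | g x = true} := by
  rw [← card_filter_not_add_card_filter g, Nat.even_add] at hα
  simp only [← Nat.not_even_iff_odd, hα]

lemma card_filter_and_prod (g : α → Bool) (h : β → Bool) :
    #{p : α × β | (g p.1 && h p.2) = true} = #{x | g x = true} * #{y | h y = true} := by
  simp only [Bool.and_eq_true]
  rw [← card_product, ← filter_product, univ_product_univ]

lemma odd_card_filter_and_prod_iff (g : α → Bool) (h : β → Bool) :
    Odd #{p : α × β | (g p.1 && h p.2) = true} ↔ Odd #{x | g x = true} ∧ Odd #{y | h y = true} := by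
  rw [card_filter_and_prod, Nat.odd_mul]

lemma odd_card_filter_or_prod_iff (hα : Even (Fintype.card α)) (hβ : Even (Fintype.card β))
    (g : α → Bool) (h : β → Bool) :
    Odd #{p : α × β | (g p.1 || h p.2) = true} ↔ Odd #{x | g x = true} ∧ Odd #{y | h y = true} := by
  have hαβ : Even (Fintype.card (α × β)) := by
    rw [Fintype.card_prod]
    exact hα.mul_right _
  rw [← odd_card_filter_not_iff hαβ, ← odd_card_filter_not_iff hα g, ← odd_card_filter_not_iff hβ h,
    ← odd_card_filter_and_prod_iff]
  simp only [Bool.not_or]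

lemma card_filter_eq_add_card_filter_eq_not (f g : α → Bool) :
    #{x | f x = g x} + #{x | f x = !g x} = Fintype.card α := by
  rw [← card_univ, ← card_filter_add_card_filter_not (s := univ) (fun x => f x = g x)]
  simp only [Bool.eq_not_iff]

lemma card_filter_eq_add_card_add_card (f g : α → Bool) :
    #{x | f x = g x} + #{x | f x = true} + #{x | g x = true} =
      Fintype.card α + 2 * #{x | (f x && g x) = true} := by
  simp only [card_filter, Fintype.card_eq_sum_ones, mul_sum, ← sum_add_distrib]
  refine sum_congr rfl fun x _ => ?_
  cases f x <;> cases g x <;> rfl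

end BoolCounting

def halvesEquiv (d : ℕ) :
    (Fin (2 ^ (d + 1)) → Bool) ≃ (Fin (2 ^ d) → Bool) × (Fin (2 ^ d) → Bool) :=
  ((finCongr (by rw [pow_succ, mul_two])).arrowCongr (Equiv.refl Bool)).trans
    (Fin.appendEquiv _ _).symm

-- `finCongr` composed with `Fin.castAdd` / `Fin.natAdd` reduces to the index maps of `andOrTree`.
lemma andOrTree_succ (d : ℕ) (X : Fin (2 ^ (d + 1)) → Bool) :
    andOrTree (d + 1) X =
      if (d + 1) % 2 = 1 then andOrTree d (halvesEquiv d X).1 && andOrTree d (halvesEquiv d X).2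
      else andOrTree d (halvesEquiv d X).1 || andOrTree d (halvesEquiv d X).2 :=
  rfl

lemma even_card_fun_fin_two_pow_bool (d : ℕ) : Even (Fintype.card (Fin (2 ^ d) → Bool)) := by
  rw [Fintype.card_fun, Fintype.card_fin, Fintype.card_bool]
  exact (Nat.even_pow' (Nat.two_pow_pos d).ne').mpr even_two

lemma odd_card_filter_andOrTree (d : ℕ) : Odd #{X | andOrTree d X = true} := by
  induction d with
  | zero => decide
  | succ d ih =>
    have hsplit : #{X | andOrTree (d + 1) X = true} =
        #{p : (Fin (2 ^ d) → Bool) × (Fin (2 ^ d) → Bool) |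
          (if (d + 1) % 2 = 1 then andOrTree d p.1 && andOrTree d p.2
            else andOrTree d p.1 || andOrTree d p.2) = true} :=
      card_equiv (halvesEquiv d) fun X => by rw [mem_filter_univ, mem_filter_univ, andOrTree_succ]
    have heven := even_card_fun_fin_two_pow_bool d
    split_ifs at hsplit
    · rw [hsplit, odd_card_filter_and_prod_iff]
      exact ⟨ih, ih⟩
    · rw [hsplit, odd_card_filter_or_prod_iff heven heven]
      exact ⟨ih, ih⟩

/-- Let `n = 2^d`. For every Boolean function `f : {0,1}ⁿ → {0,1}`, one of the four functions
`{constant 0, constant 1, T_d, 1 − T_d}` agrees with `f` on at least `2^(n-1) + 1` inputs. -/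
theorem weak_f_via_andOrTree (d : ℕ) (f : (Fin (2 ^ d) → Bool) → Bool) :
    ∃ g ∈ [(fun _ : Fin (2 ^ d) → Bool => false), (fun _ : Fin (2 ^ d) → Bool => true),
           andOrTree d, (fun X : Fin (2 ^ d) → Bool => !andOrTree d X)],
      2 ^ (2 ^ d - 1) + 1 ≤
        (Finset.univ.filter (fun X : Fin (2 ^ d) → Bool => f X = g X)).card := by
  by_contra! hcon
  simp only [List.forall_mem_cons, List.not_mem_nil, IsEmpty.forall_iff, implies_true,
    and_true, Nat.lt_succ_iff] at hcon
  obtain ⟨h0, h1, hT, hnotT⟩ := hcon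
  have hcard : Fintype.card (Fin (2 ^ d) → Bool) = 2 * 2 ^ (2 ^ d - 1) := by
    rw [Fintype.card_fun, Fintype.card_fin, Fintype.card_bool, ← pow_succ',
      Nat.sub_add_cancel Nat.one_le_two_pow]
  have hconst := card_filter_eq_add_card_filter_eq_not f fun _ => false
  have htree := card_filter_eq_add_card_filter_eq_not f (andOrTree d)
  have hparity := card_filter_eq_add_card_add_card f (andOrTree d)
  obtain ⟨k, hk⟩ := odd_card_filter_andOrTree d
  simp only [Bool.not_false] at hconst
  omega
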